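/- With f, X, α, β and the layer treaty k = k_M as above (M chosen so that RVaR_{α,β}(k(X)) = RVaR_{α,β}(f(X))), it holds that k(X) ≤_icx f(X) and RVaR_{α,β}(X - k(X)) = RVaR_{α,β}(X - f(X)). -/
import Mathlib


open MeasureTheory ProbabilityTheory Set

noncomputable section

variable {Ω Ω' : Type*} [MeasurableSpace Ω] [MeasurableSpace Ω']

/-- Distribution function of a random variable. -/
def distFun (μ : Measure Ω) (X : Ω → ℝ) (x : ℝ) : ℝ := (μ {ω | X ω ≤ x}).toReal

/-- Value-at-Risk at level α: `VaR_α(X) = inf {x | F_X(x) ≥ 1-α}`. -/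
def VaR (μ : Measure Ω) (X : Ω → ℝ) (α : ℝ) : ℝ := sInf {x | 1 - α ≤ distFun μ X x}

/-- Range-Value-at-Risk with parameters α, β (for β > 0). -/
def RVaR (μ : Measure Ω) (X : Ω → ℝ) (α β : ℝ) : ℝ := (1/β) * ∫ s in α..(α+β), VaR μ X s

/-- Usual stochastic order. -/
def le_st (μ : Measure Ω) (X : Ω → ℝ) (ν : Measure Ω') (Y : Ω' → ℝ) : Prop :=
  ∀ f : ℝ → ℝ, Monotone f → Integrable (fun ω => f (X ω)) μ →
    Integrable (fun ω => f (Y ω)) ν → ∫ ω, f (X ω) ∂μ ≤ ∫ ω, f (Y ω) ∂ν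

/-- Convex order. -/
def le_cx (μ : Measure Ω) (X : Ω → ℝ) (ν : Measure Ω') (Y : Ω' → ℝ) : Prop :=
  ∀ f : ℝ → ℝ, ConvexOn ℝ univ f → Integrable (fun ω => f (X ω)) μ →
    Integrable (fun ω => f (Y ω)) ν → ∫ ω, f (X ω) ∂μ ≤ ∫ ω, f (Y ω) ∂ν

/-- Increasing convex order. -/
def le_icx (μ : Measure Ω) (X : Ω → ℝ) (ν : Measure Ω') (Y : Ω' → ℝ) : Prop :=
  ∀ f : ℝ → ℝ, Monotone f → ConvexOn ℝ univ f → Integrable (fun ω => f (X ω)) μ →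
    Integrable (fun ω => f (Y ω)) ν → ∫ ω, f (X ω) ∂μ ≤ ∫ ω, f (Y ω) ∂ν

/-- Admissible ceded loss functions: `0 ≤ f(x) ≤ x` with both `f` and the
retained loss `x - f(x)` increasing. -/
def Ceded (f : ℝ → ℝ) : Prop :=
  Monotone f ∧ Monotone (fun x => x - f x) ∧ ∀ x, 0 ≤ x → 0 ≤ f x ∧ f x ≤ x

/-- Layer reinsurance treaty with deductible `a` and upper bound `b`. -/
def layer (a b x : ℝ) : ℝ := min (max (x - a) 0) b

/-- Joint distribution function of a random vector. -/
def jointCDF {n : ℕ} (μ : Measure Ω) (X : Fin n → Ω → ℝ) (x : Fin n → ℝ) : ℝ :=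
  (μ {ω | ∀ i, X i ω ≤ x i}).toReal

/-- All one-dimensional marginals are uniform on [0,1]. -/
def uniformMarginals {n : ℕ} (ν : Measure (Fin n → ℝ)) : Prop :=
  ∀ i, Measure.map (fun u => u i) ν = volume.restrict (Icc (0:ℝ) 1)

/-- `C` is (the distribution function of) an `n`-dimensional copula. -/
def IsCopula {n : ℕ} (C : (Fin n → ℝ) → ℝ) : Prop :=
  ∃ ν : Measure (Fin n → ℝ), IsProbabilityMeasure ν ∧ uniformMarginals ν ∧
    ∀ x, C x = (ν {u | ∀ i, u i ≤ x i}).toReal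

/-- `C` is a copula of the random vector `X`. -/
def HasCopula {n : ℕ} (μ : Measure Ω) (X : Fin n → Ω → ℝ) (C : (Fin n → ℝ) → ℝ) : Prop :=
  IsCopula C ∧ ∀ x : Fin n → ℝ, jointCDF μ X x = C (fun i => distFun μ (X i) (x i))

/-- Positively dependent through the stochastic ordering: for each `i`,
`E[f(X_{-i}) | X_i = x]` is increasing in `x` for every componentwise increasing `f`
(not depending on coordinate `i`). -/
def PDS {n : ℕ} (μ : Measure Ω) (X : Fin n → Ω → ℝ) : Prop :=
  ∀ i : Fin n, ∀ f : (Fin n → ℝ) → ℝ, Monotone f →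
    (∀ a b : Fin n → ℝ, (∀ j, j ≠ i → a j = b j) → f a = f b) →
    ∃ g : ℝ → ℝ, Monotone g ∧
      (μ[(fun ω => f (fun j => X j ω)) | MeasurableSpace.comap (X i) (borel ℝ)]
        =ᵐ[μ] fun ω => g (X i ω))

/-- `C` is a PDS copula. -/
def IsPDSCopula {n : ℕ} (C : (Fin n → ℝ) → ℝ) : Prop :=
  ∃ ν : Measure (Fin n → ℝ), IsProbabilityMeasure ν ∧ uniformMarginals ν ∧
    (∀ x, C x = (ν {u | ∀ i, u i ≤ x i}).toReal) ∧ PDS ν (fun i u => u i)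

/-- Positive orthant dependence. -/
def POD {n : ℕ} (μ : Measure Ω) (X : Fin n → Ω → ℝ) : Prop :=
  ∀ x : Fin n → ℝ,
    (∏ i, (μ {ω | X i ω ≤ x i}).toReal) ≤ (μ {ω | ∀ i, X i ω ≤ x i}).toReal ∧
    (∏ i, (μ {ω | x i < X i ω}).toReal) ≤ (μ {ω | ∀ i, x i < X i ω}).toReal

/-- A comonotone random vector. -/
def Comonotone {m : ℕ} (Z : Fin m → Ω → ℝ) : Prop :=
  ∀ i j ω ω', 0 ≤ (Z i ω - Z i ω') * (Z j ω - Z j ω')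

section Aux

open Filter Topology

variable {Ω : Type*} [MeasurableSpace Ω]

lemma distFun_mono (μ : Measure Ω) [IsFiniteMeasure μ] (X : Ω → ℝ) {a b : ℝ} (hab : a ≤ b) :
    distFun μ X a ≤ distFun μ X b :=
  ENNReal.toReal_mono (measure_ne_top _ _) (measure_mono fun ω h => le_trans h hab)

lemma distFun_nonneg (μ : Measure Ω) (X : Ω → ℝ) (x : ℝ) : 0 ≤ distFun μ X x :=
  ENNReal.toReal_nonneg

lemma distFun_zero_of_neg (μ : Measure Ω) {X : Ω → ℝ} (hX0 : ∀ ω, 0 ≤ X ω) {x : ℝ}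
    (hx : x < 0) : distFun μ X x = 0 := by
  have h : {ω | X ω ≤ x} = (∅ : Set Ω) := by
    ext ω
    simp only [mem_setOf_eq, mem_empty_iff_false, iff_false]
    intro h
    exact absurd (le_trans (hX0 ω) h) (not_le.2 hx)
  simp [distFun, h]

lemma exists_distFun_ge (μ : Measure Ω) [IsProbabilityMeasure μ] (X : Ω → ℝ) {p : ℝ}
    (hp : p < 1) : ∃ x, p ≤ distFun μ X x := by
  rcases le_or_gt p 0 with h | h
  · exact ⟨0, le_trans h (distFun_nonneg μ X 0)⟩
  have hmono : Monotone (fun n : ℕ => {ω | X ω ≤ (n : ℝ)}) := by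
    intro m n hmn ω hω
    simp only [mem_setOf_eq] at hω ⊢
    exact le_trans hω (by exact_mod_cast hmn)
  have hU : (⋃ n : ℕ, {ω | X ω ≤ (n : ℝ)}) = univ := by
    ext ω
    simp only [mem_iUnion, mem_setOf_eq, mem_univ, iff_true]
    exact exists_nat_ge (X ω)
  have ht := tendsto_measure_iUnion_atTop (μ := μ) hmono
  rw [hU, measure_univ] at ht
  have hlt : ENNReal.ofReal p < 1 := ENNReal.ofReal_lt_one.2 hp
  obtain ⟨n, hn⟩ := ((tendsto_order.1 ht).1 _ hlt).exists
  refine ⟨n, ?_⟩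
  have := (ENNReal.ofReal_lt_iff_lt_toReal h.le (measure_ne_top _ _)).1 hn
  exact this.le

lemma bddBelow_VaRset (μ : Measure Ω) {X : Ω → ℝ} (hX0 : ∀ ω, 0 ≤ X ω) {s : ℝ} (hs1 : s < 1) :
    BddBelow {x | 1 - s ≤ distFun μ X x} := by
  refine ⟨0, fun x hx => ?_⟩
  by_contra h
  push_neg at h
  rw [mem_setOf_eq, distFun_zero_of_neg μ hX0 h] at hx
  linarith

lemma nonempty_VaRset (μ : Measure Ω) [IsProbabilityMeasure μ] (X : Ω → ℝ) {s : ℝ}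
    (hs0 : 0 < s) : {x | 1 - s ≤ distFun μ X x}.Nonempty := by
  obtain ⟨x, hx⟩ := exists_distFun_ge μ X (by linarith : (1:ℝ) - s < 1)
  exact ⟨x, hx⟩

lemma VaR_le_of (μ : Measure Ω) {X : Ω → ℝ} (hX0 : ∀ ω, 0 ≤ X ω) {s x : ℝ} (hs1 : s < 1)
    (h : 1 - s ≤ distFun μ X x) : VaR μ X s ≤ x :=
  csInf_le (bddBelow_VaRset μ hX0 hs1) h

lemma distFun_lt_of_lt_VaR (μ : Measure Ω) {X : Ω → ℝ} (hX0 : ∀ ω, 0 ≤ X ω) {s x : ℝ}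
    (hs1 : s < 1) (hx : x < VaR μ X s) : distFun μ X x < 1 - s := by
  by_contra h
  push_neg at h
  exact absurd (VaR_le_of μ hX0 hs1 h) (not_le.2 hx)

lemma one_sub_le_distFun_VaR (μ : Measure Ω) [IsProbabilityMeasure μ] {X : Ω → ℝ}
    (hXm : Measurable X) (hX0 : ∀ ω, 0 ≤ X ω) {s : ℝ} (hs0 : 0 < s) (hs1 : s < 1) :
    1 - s ≤ distFun μ X (VaR μ X s) := by
  set q := VaR μ X s with hq
  have hne := nonempty_VaRset μ X hs0
  have key : ∀ n : ℕ, ENNReal.ofReal (1 - s) ≤ μ {ω | X ω ≤ q + 1/(n+1)} := by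
    intro n
    have hpos : (0:ℝ) < 1/(n+1) := by positivity
    have hq' : sInf {x | 1 - s ≤ distFun μ X x} < q + 1/(n+1) := by
      rw [hq, VaR] at *
      linarith
    obtain ⟨x, hxA, hxlt⟩ := exists_lt_of_csInf_lt hne hq'
    have h1 : 1 - s ≤ distFun μ X (q + 1/(n+1)) := le_trans hxA (distFun_mono μ X hxlt.le)
    exact ENNReal.ofReal_le_of_le_toReal h1
  have hA : Antitone (fun n : ℕ => {ω | X ω ≤ q + 1/(n+1)}) := by
    intro m n hmn ω hω
    simp only [mem_setOf_eq] at hω ⊢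
    have hc : ((m:ℝ)+1) ≤ (n:ℝ)+1 := by exact_mod_cast Nat.succ_le_succ hmn
    have h1n : (1:ℝ)/(n+1) ≤ 1/(m+1) := one_div_le_one_div_of_le (by positivity) hc
    linarith
  have hI : (⋂ n : ℕ, {ω | X ω ≤ q + 1/(n+1)}) = {ω | X ω ≤ q} := by
    ext ω
    simp only [mem_iInter, mem_setOf_eq]
    constructor
    · intro h
      by_contra hq'
      push_neg at hq'
      obtain ⟨n, hn⟩ := exists_nat_one_div_lt (sub_pos.2 hq')
      have := h n
      linarith
    · intro h n
      have : (0:ℝ) < 1/(n+1) := by positivity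
      linarith
  have hmeas : ∀ n : ℕ, MeasureTheory.NullMeasurableSet {ω | X ω ≤ q + 1/(n+1)} μ :=
    fun n => ((hXm measurableSet_Iic : MeasurableSet {ω | X ω ≤ q + 1/(n+1)})).nullMeasurableSet
  have hlim := tendsto_measure_iInter_atTop hmeas hA ⟨0, measure_ne_top _ _⟩
  rw [hI] at hlim
  have hle : ENNReal.ofReal (1 - s) ≤ μ {ω | X ω ≤ q} :=
    ge_of_tendsto hlim (Filter.Eventually.of_forall key)
  exact (ENNReal.ofReal_le_iff_le_toReal (measure_ne_top _ _)).1 hle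

lemma VaR_one (μ : Measure Ω) (X : Ω → ℝ) : VaR μ X 1 = 0 := by
  have h : {x | 1 - 1 ≤ distFun μ X x} = univ := by
    ext x
    simp [distFun_nonneg]
  rw [VaR, h]
  exact Real.sInf_of_not_bddBelow not_bddBelow_univ

lemma VaR_nonneg (μ : Measure Ω) {X : Ω → ℝ} (hX0 : ∀ ω, 0 ≤ X ω) {s : ℝ} (hs1 : s ≤ 1) :
    0 ≤ VaR μ X s := by
  rcases eq_or_lt_of_le hs1 with rfl | hs1
  · rw [VaR_one]
  · refine Real.sInf_nonneg fun x hx => ?_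
    by_contra h
    push_neg at h
    rw [mem_setOf_eq, distFun_zero_of_neg μ hX0 h] at hx
    linarith

lemma VaR_antitone (μ : Measure Ω) [IsProbabilityMeasure μ] {X : Ω → ℝ}
    (hX0 : ∀ ω, 0 ≤ X ω) {s t : ℝ} (hs0 : 0 < s) (hst : s ≤ t) (ht1 : t ≤ 1) :
    VaR μ X t ≤ VaR μ X s := by
  rcases eq_or_lt_of_le ht1 with rfl | ht1
  · rw [VaR_one]
    exact VaR_nonneg μ hX0 (by linarith)
  · refine csInf_le_csInf (bddBelow_VaRset μ hX0 ht1) (nonempty_VaRset μ X hs0)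
      fun x hx => ?_
    rw [mem_setOf_eq] at hx ⊢
    linarith

lemma VaR_comp (μ : Measure Ω) [IsProbabilityMeasure μ] {X : Ω → ℝ}
    (hXm : Measurable X) (hX0 : ∀ ω, 0 ≤ X ω) {g : ℝ → ℝ} (hg : Monotone g)
    (hgc : Continuous g) {s : ℝ} (hs0 : 0 < s) (hs1 : s < 1) :
    VaR μ (fun ω => g (X ω)) s = g (VaR μ X s) := by
  set q := VaR μ X s with hq
  have hmemB : 1 - s ≤ distFun μ (fun ω => g (X ω)) (g q) := by
    refine le_trans (one_sub_le_distFun_VaR μ hXm hX0 hs0 hs1) ?_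
    exact ENNReal.toReal_mono (measure_ne_top _ _) (measure_mono fun ω h => hg h)
  have hBdd : BddBelow {y | 1 - s ≤ distFun μ (fun ω => g (X ω)) y} := by
    refine ⟨g 0, fun y hy => ?_⟩
    by_contra hlt
    push_neg at hlt
    have hempty : {ω | g (X ω) ≤ y} = (∅ : Set Ω) := by
      ext ω
      simp only [mem_setOf_eq, mem_empty_iff_false, iff_false]
      intro h
      exact absurd (le_trans (hg (hX0 ω)) h) (not_le.2 hlt)
    rw [mem_setOf_eq] at hy
    rw [distFun, hempty] at hy
    simp at hy
    linarith
  refine le_antisymm (csInf_le hBdd hmemB) (le_csInf ⟨_, hmemB⟩ fun y hy => ?_)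
  rw [mem_setOf_eq] at hy
  by_contra hlt
  push_neg at hlt
  have hSne : {x : ℝ | g x ≤ y}.Nonempty := by
    by_contra hemp
    rw [not_nonempty_iff_eq_empty] at hemp
    have hempty : {ω | g (X ω) ≤ y} = (∅ : Set Ω) := by
      ext ω
      simp only [mem_setOf_eq, mem_empty_iff_false, iff_false]
      intro h
      have hmem : X ω ∈ {x : ℝ | g x ≤ y} := h
      rw [hemp] at hmem
      exact hmem
    rw [distFun, hempty] at hy
    simp at hy
    linarith
  have hSbdd : BddAbove {x : ℝ | g x ≤ y} := by
    refine ⟨q, fun x hx => ?_⟩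
    by_contra hq'
    push_neg at hq'
    exact absurd (le_trans (hg hq'.le) hx) (not_le.2 hlt)
  have hclosed : IsClosed {x : ℝ | g x ≤ y} := isClosed_le hgc continuous_const
  have htmem : sSup {x : ℝ | g x ≤ y} ∈ {x : ℝ | g x ≤ y} := hclosed.csSup_mem hSne hSbdd
  have htlt : sSup {x : ℝ | g x ≤ y} < q := by
    by_contra hge
    push_neg at hge
    exact absurd (le_trans (hg hge) htmem) (not_le.2 hlt)
  have hsub : {ω | g (X ω) ≤ y} ⊆ {ω | X ω ≤ sSup {x : ℝ | g x ≤ y}} :=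
    fun ω h => le_csSup hSbdd h
  have h1 : distFun μ (fun ω => g (X ω)) y ≤ distFun μ X (sSup {x : ℝ | g x ≤ y}) :=
    ENNReal.toReal_mono (measure_ne_top _ _) (measure_mono hsub)
  have h2 := distFun_lt_of_lt_VaR μ hX0 hs1 htlt
  linarith

lemma VaR_le_iff (μ : Measure Ω) [IsProbabilityMeasure μ] {X : Ω → ℝ}
    (hXm : Measurable X) (hX0 : ∀ ω, 0 ≤ X ω) {s x : ℝ} (hs : s ∈ Set.Ioo (0:ℝ) 1) :
    VaR μ X s ≤ x ↔ 1 - distFun μ X x ≤ s := by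
  constructor
  · intro h
    have h1 := one_sub_le_distFun_VaR μ hXm hX0 hs.1 hs.2
    have h2 := distFun_mono μ X h
    linarith
  · intro h
    exact VaR_le_of μ hX0 hs.2 (by linarith)

lemma measurable_VaR_indicator (μ : Measure Ω) [IsProbabilityMeasure μ] {X : Ω → ℝ}
    (hXm : Measurable X) (hX0 : ∀ ω, 0 ≤ X ω) :
    Measurable ((Set.Ioo (0:ℝ) 1).indicator (fun s => VaR μ X s)) := by
  apply measurable_of_Iic
  intro x
  have hset : (Set.Ioo (0:ℝ) 1).indicator (fun s => VaR μ X s) ⁻¹' Iic x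
      = (Ioo (0:ℝ) 1 ∩ Ici (1 - distFun μ X x)) ∪ ((Ioo (0:ℝ) 1)ᶜ ∩ {s : ℝ | (0:ℝ) ≤ x}) := by
    ext s
    by_cases hs : s ∈ Ioo (0:ℝ) 1
    · simp only [mem_preimage, indicator_of_mem hs, mem_Iic, mem_union, mem_inter_iff,
        mem_compl_iff, hs, not_true_eq_false, false_and, or_false, true_and, mem_Ici]
      exact VaR_le_iff μ hXm hX0 hs
    · simp only [mem_preimage, indicator_of_notMem hs, mem_Iic, mem_union, mem_inter_iff,
        mem_compl_iff, hs, false_and, false_or, not_false_eq_true, true_and, mem_setOf_eq]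
  rw [hset]
  exact (measurableSet_Ioo.inter measurableSet_Ici).union
    (measurableSet_Ioo.compl.inter (MeasurableSet.const _))

lemma aemeasurable_VaR (μ : Measure Ω) [IsProbabilityMeasure μ] {X : Ω → ℝ}
    (hXm : Measurable X) (hX0 : ∀ ω, 0 ≤ X ω) :
    AEMeasurable (fun s => VaR μ X s) (volume.restrict (Set.Ioo (0:ℝ) 1)) :=
  ⟨(Set.Ioo (0:ℝ) 1).indicator (fun s => VaR μ X s), measurable_VaR_indicator μ hXm hX0,
    (indicator_ae_eq_restrict (μ := volume) (f := fun s => VaR μ X s)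
      (measurableSet_Ioo (a := (0:ℝ)) (b := 1))).symm⟩

lemma map_VaR (μ : Measure Ω) [IsProbabilityMeasure μ] {X : Ω → ℝ}
    (hXm : Measurable X) (hX0 : ∀ ω, 0 ≤ X ω) :
    Measure.map (fun s => VaR μ X s) (volume.restrict (Set.Ioo (0:ℝ) 1)) = Measure.map X μ := by
  have hv := aemeasurable_VaR μ hXm hX0
  haveI : IsProbabilityMeasure (volume.restrict (Set.Ioo (0:ℝ) 1)) := by
    constructor
    simp [Real.volume_Ioo]
  haveI : IsProbabilityMeasure
      (Measure.map (fun s => VaR μ X s) (volume.restrict (Set.Ioo (0:ℝ) 1))) :=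
    Measure.isProbabilityMeasure_map hv
  haveI : IsProbabilityMeasure (Measure.map X μ) := Measure.isProbabilityMeasure_map hXm.aemeasurable
  refine Measure.ext_of_Iic _ _ (fun x => ?_)
  rw [Measure.map_apply hXm measurableSet_Iic,
    Measure.map_apply₀ hv measurableSet_Iic.nullMeasurableSet,
    Measure.restrict_apply' measurableSet_Ioo]
  have hF0 : 0 ≤ distFun μ X x := distFun_nonneg μ X x
  have hF1 : distFun μ X x ≤ 1 := by
    have : μ {ω | X ω ≤ x} ≤ 1 := prob_le_one
    rw [distFun]
    exact ENNReal.toReal_le_of_le_ofReal one_pos.le (by simpa using this)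
  have hseteq : ((fun s => VaR μ X s) ⁻¹' Iic x) ∩ Ioo (0:ℝ) 1
      = Ioo (0:ℝ) 1 ∩ Ici (1 - distFun μ X x) := by
    ext s
    simp only [mem_inter_iff, mem_preimage, mem_Iic, mem_Ici]
    constructor
    · rintro ⟨h1, h2⟩
      exact ⟨h2, (VaR_le_iff μ hXm hX0 h2).1 h1⟩
    · rintro ⟨h1, h2⟩
      exact ⟨(VaR_le_iff μ hXm hX0 h1).2 h2, h1⟩
  rw [hseteq]
  have hXmeas : μ (X ⁻¹' Iic x) = ENNReal.ofReal (distFun μ X x) := by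
    rw [distFun, ENNReal.ofReal_toReal (measure_ne_top _ _)]
    rfl
  rw [hXmeas]
  rcases eq_or_lt_of_le (sub_nonneg.2 hF1) with heq | hpos
  · have : Ioo (0:ℝ) 1 ∩ Ici (1 - distFun μ X x) = Ioo (0:ℝ) 1 := by
      rw [inter_eq_self_of_subset_left]
      intro s hs
      rw [mem_Ici, ← heq]
      exact hs.1.le
    rw [this, Real.volume_Ioo]
    congr 1
    linarith
  · have : Ioo (0:ℝ) 1 ∩ Ici (1 - distFun μ X x) = Ico (1 - distFun μ X x) 1 := by
      ext s
      simp only [mem_inter_iff, mem_Ioo, mem_Ici, mem_Ico]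
      constructor
      · rintro ⟨⟨_, h2⟩, h3⟩
        exact ⟨h3, h2⟩
      · rintro ⟨h1, h2⟩
        exact ⟨⟨lt_of_lt_of_le hpos h1, h2⟩, h1⟩
    rw [this, Real.volume_Ico]
    congr 1
    ring

lemma integral_VaR_comp (μ : Measure Ω) [IsProbabilityMeasure μ] {X : Ω → ℝ}
    (hXm : Measurable X) (hX0 : ∀ ω, 0 ≤ X ω) {G : ℝ → ℝ} (hG : Measurable G) :
    ∫ ω, G (X ω) ∂μ = ∫ s in Set.Ioo (0:ℝ) 1, G (VaR μ X s) := by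
  rw [← MeasureTheory.integral_map hXm.aemeasurable hG.aestronglyMeasurable,
    ← map_VaR μ hXm hX0,
    MeasureTheory.integral_map (aemeasurable_VaR μ hXm hX0) hG.aestronglyMeasurable]

lemma integrable_VaR_comp_iff (μ : Measure Ω) [IsProbabilityMeasure μ] {X : Ω → ℝ}
    (hXm : Measurable X) (hX0 : ∀ ω, 0 ≤ X ω) {G : ℝ → ℝ} (hG : Measurable G) :
    Integrable (fun ω => G (X ω)) μ ↔
      IntegrableOn (fun s => G (VaR μ X s)) (Set.Ioo (0:ℝ) 1) := by
  rw [IntegrableOn]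
  constructor
  · intro h
    have h1 : Integrable G (Measure.map X μ) :=
      (integrable_map_measure hG.aestronglyMeasurable hXm.aemeasurable).2 h
    rw [← map_VaR μ hXm hX0] at h1
    exact (integrable_map_measure hG.aestronglyMeasurable (aemeasurable_VaR μ hXm hX0)).1 h1
  · intro h
    have h1 : Integrable G
        (Measure.map (fun s => VaR μ X s) (volume.restrict (Set.Ioo (0:ℝ) 1))) :=
      (integrable_map_measure hG.aestronglyMeasurable (aemeasurable_VaR μ hXm hX0)).2 h
    rw [map_VaR μ hXm hX0] at h1
    exact (integrable_map_measure hG.aestronglyMeasurable hXm.aemeasurable).1 h1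

lemma layer_mono (a b : ℝ) : Monotone (layer a b) := by
  intro x y hxy
  exact min_le_min (max_le_max (by linarith) le_rfl) le_rfl

lemma layer_cont (a b : ℝ) : Continuous (layer a b) :=
  ((continuous_id.sub continuous_const).max continuous_const).min continuous_const

lemma layer_retained_mono (a b : ℝ) : Monotone (fun x => x - layer a b x) := by
  intro x y hxy
  simp only [layer]
  have hxy' : max (x - a) 0 ≤ max (y - a) 0 := max_le_max (by linarith) le_rfl
  have h1 : max (y - a) 0 - max (x - a) 0 ≤ y - x := by
    rcases le_total (x - a) 0 with h | h
    · rw [max_eq_right h]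
      rcases le_total (y - a) 0 with h' | h'
      · rw [max_eq_right h']; linarith
      · rw [max_eq_left h']; linarith
    · rw [max_eq_left h, max_eq_left (by linarith : (0:ℝ) ≤ y - a)]
      linarith
  have h2 : min (max (y - a) 0) b - min (max (x - a) 0) b ≤
      max (y - a) 0 - max (x - a) 0 := by
    rcases le_total (max (y - a) 0) b with h' | h'
    · rw [min_eq_left h', min_eq_left (le_trans hxy' h')]
    · rw [min_eq_right h']
      rcases le_total (max (x - a) 0) b with h'' | h''
      · rw [min_eq_left h'']; linarith
      · rw [min_eq_right h'']; linarith
  linarith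

lemma Ceded.sub_le {f : ℝ → ℝ} (hf : Ceded f) {x y : ℝ} (h : x ≤ y) : f y - f x ≤ y - x := by
  have := hf.2.1 h
  simp only at this
  linarith

lemma Ceded.continuous {f : ℝ → ℝ} (hf : Ceded f) : Continuous f := by
  refine (LipschitzWith.of_dist_le_mul (K := 1) fun x y => ?_).continuous
  rw [Real.dist_eq, Real.dist_eq, NNReal.coe_one, one_mul]
  rw [abs_sub_le_iff]
  rcases le_total x y with h | h
  · have h1 := hf.sub_le h
    have h2 : 0 ≤ f y - f x := sub_nonneg.2 (hf.1 h)
    have h3 : y - x ≤ |x - y| := by rw [abs_sub_comm]; exact le_abs_self _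
    constructor <;> linarith
  · have h1 := hf.sub_le h
    have h2 : 0 ≤ f x - f y := sub_nonneg.2 (hf.1 h)
    have h3 : x - y ≤ |x - y| := le_abs_self _
    constructor <;> linarith

lemma exists_subgrad {g : ℝ → ℝ} (hg : ConvexOn ℝ univ g) (M : ℝ) :
    ∃ c : ℝ, (∀ t₁ t₂, t₁ ≤ t₂ → t₂ ≤ M → g t₂ - g t₁ ≤ c * (t₂ - t₁)) ∧
      (∀ t, M ≤ t → g M + c * (t - M) ≤ g t) := by
  have hSne : ((fun t => (g M - g t) / (M - t)) '' Iio M).Nonempty :=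
    ⟨_, ⟨M - 1, by simp, rfl⟩⟩
  have hSbdd : BddAbove ((fun t => (g M - g t) / (M - t)) '' Iio M) := by
    refine ⟨(g (M + 1) - g M) / (M + 1 - M), ?_⟩
    rintro z ⟨t, ht, rfl⟩
    exact hg.slope_mono_adjacent (mem_univ t) (mem_univ (M + 1)) ht (lt_add_one M)
  refine ⟨sSup ((fun t => (g M - g t) / (M - t)) '' Iio M), ?_, ?_⟩
  · intro t₁ t₂ h12 h2M
    rcases eq_or_lt_of_le h12 with rfl | h12
    · simp
    rcases eq_or_lt_of_le h2M with rfl | h2M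
    · have hmem : (g t₂ - g t₁) / (t₂ - t₁) ∈ (fun t => (g t₂ - g t) / (t₂ - t)) '' Iio t₂ :=
        ⟨t₁, h12, rfl⟩
      have hle := le_csSup hSbdd hmem
      have hpos : 0 < t₂ - t₁ := sub_pos.2 h12
      calc g t₂ - g t₁ = (g t₂ - g t₁) / (t₂ - t₁) * (t₂ - t₁) := by field_simp
        _ ≤ _ := mul_le_mul_of_nonneg_right hle hpos.le
    · have hadj := hg.slope_mono_adjacent (mem_univ t₁) (mem_univ M) h12 h2M
      have hmem : (g M - g t₂) / (M - t₂) ∈ (fun t => (g M - g t) / (M - t)) '' Iio M :=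
        ⟨t₂, h2M, rfl⟩
      have hle := le_csSup hSbdd hmem
      have hpos : 0 < t₂ - t₁ := sub_pos.2 h12
      calc g t₂ - g t₁ = (g t₂ - g t₁) / (t₂ - t₁) * (t₂ - t₁) := by field_simp
        _ ≤ (g M - g t₂) / (M - t₂) * (t₂ - t₁) := mul_le_mul_of_nonneg_right hadj hpos.le
        _ ≤ _ := mul_le_mul_of_nonneg_right hle hpos.le
  · intro t hMt
    rcases eq_or_lt_of_le hMt with rfl | hMt
    · simp
    have hub2 : sSup ((fun t' => (g M - g t') / (M - t')) '' Iio M) ≤ (g t - g M) / (t - M) := by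
      refine csSup_le hSne ?_
      rintro z ⟨t', ht', rfl⟩
      exact hg.slope_mono_adjacent (mem_univ t') (mem_univ t) ht' hMt
    have hpos : 0 < t - M := sub_pos.2 hMt
    have h1 := mul_le_mul_of_nonneg_right hub2 hpos.le
    rw [div_mul_cancel₀ _ hpos.ne'] at h1
    linarith

end Aux

/-- with the matching upper bound `M`, the layer treaty `k` satisfies
`k(X) ≤_icx f(X)` and leaves the RVaR of the retained loss unchanged. -/

theorem layer_le_icx_and_RVaR_retained_eq
    (μ : Measure Ω) [IsProbabilityMeasure μ] (X : Ω → ℝ)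
    (hXm : Measurable X) (hX0 : ∀ ω, 0 ≤ X ω) (hXi : Integrable X μ)
    (f : ℝ → ℝ) (hf : Ceded f)
    (α β : ℝ) (hα : 0 ≤ α) (hβ : 0 < β) (hαβ : α + β ≤ 1)
    (M : ℝ) (hM : M ∈ Icc (f (VaR μ X (α+β))) (f (VaR μ X α)))
    (hmatch : RVaR μ (fun ω => layer (VaR μ X (α+β) - f (VaR μ X (α+β))) M (X ω)) α β
      = RVaR μ (fun ω => f (X ω)) α β) :
    le_icx μ (fun ω => layer (VaR μ X (α+β) - f (VaR μ X (α+β))) M (X ω))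
      μ (fun ω => f (X ω)) ∧
    RVaR μ (fun ω => X ω - layer (VaR μ X (α+β) - f (VaR μ X (α+β))) M (X ω)) α β
      = RVaR μ (fun ω => X ω - f (X ω)) α β := by
  have hfc : Continuous f := hf.continuous
  have hαβ0 : 0 < α + β := by linarith
  have hle : α ≤ α + β := by linarith
  set d := VaR μ X (α + β) with hd
  set a := d - f d with ha
  have hd0 : 0 ≤ d := VaR_nonneg μ hX0 hαβ
  have hfd := hf.2.2 d hd0
  have hM0 : 0 ≤ M := le_trans hfd.1 hM.1
  have hIoo_sub : Ioo α (α + β) ⊆ Ioo (0:ℝ) 1 :=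
    fun s hs => ⟨lt_of_le_of_lt hα hs.1, lt_of_lt_of_le hs.2 hαβ⟩
  have hkmono := layer_mono a M
  have hkcont := layer_cont a M
  have hrkmono := layer_retained_mono a M
  have hrkcont : Continuous (fun x => x - layer a M x) := continuous_id.sub hkcont
  have hrfmono := hf.2.1
  have hrfcont : Continuous (fun x => x - f x) := continuous_id.sub hfc
  have hlayer_le_M : ∀ x, layer a M x ≤ M := fun x => min_le_right _ _
  have hlayer_nonneg : ∀ x, 0 ≤ layer a M x := fun x => le_min (le_max_right _ _) hM0
  have hlayer_le_f : ∀ x, 0 ≤ x → x ≤ d → layer a M x ≤ f x := by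
    intro x hx0 hxd
    have h1 : x - f x ≤ d - f d := by
      have := hf.2.1 hxd
      simpa using this
    refine le_trans (min_le_left _ _) (max_le (by rw [ha]; linarith) (hf.2.2 x hx0).1)
  have e1 : ∀ s ∈ Ioo α (α+β),
      VaR μ (fun ω => layer a M (X ω)) s = layer a M (VaR μ X s) :=
    fun s hs => VaR_comp μ hXm hX0 hkmono hkcont (hIoo_sub hs).1 (hIoo_sub hs).2
  have e2 : ∀ s ∈ Ioo α (α+β), VaR μ (fun ω => f (X ω)) s = f (VaR μ X s) :=
    fun s hs => VaR_comp μ hXm hX0 hf.1 hfc (hIoo_sub hs).1 (hIoo_sub hs).2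
  have hβne : (1:ℝ)/β ≠ 0 := one_div_ne_zero hβ.ne'
  have I_eq : ∫ s in Ioo α (α+β), layer a M (VaR μ X s)
      = ∫ s in Ioo α (α+β), f (VaR μ X s) := by
    have h := hmatch
    simp only [RVaR] at h
    have h2 := mul_left_cancel₀ hβne h
    rw [intervalIntegral.integral_of_le hle, intervalIntegral.integral_of_le hle,
      MeasureTheory.integral_Ioc_eq_integral_Ioo,
      MeasureTheory.integral_Ioc_eq_integral_Ioo] at h2
    rw [← setIntegral_congr_fun measurableSet_Ioo e1,
      ← setIntegral_congr_fun measurableSet_Ioo e2]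
    exact h2
  have hVint : IntegrableOn (fun s => VaR μ X s) (Ioo (0:ℝ) 1) volume :=
    (integrable_VaR_comp_iff μ hXm hX0 measurable_id).1 (by simpa using hXi)
  have hVmeas : AEMeasurable (fun s => VaR μ X s) (volume.restrict (Ioo (0:ℝ) 1)) :=
    aemeasurable_VaR μ hXm hX0
  have hfVint : IntegrableOn (fun s => f (VaR μ X s)) (Ioo (0:ℝ) 1) volume := by
    refine Integrable.mono hVint (hfc.measurable.comp_aemeasurable hVmeas).aestronglyMeasurable ?_
    refine (ae_restrict_mem measurableSet_Ioo).mono fun s hs => ?_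
    have hx0 : 0 ≤ VaR μ X s := VaR_nonneg μ hX0 hs.2.le
    have hb := hf.2.2 _ hx0
    rw [Real.norm_eq_abs, Real.norm_eq_abs, abs_of_nonneg hb.1, abs_of_nonneg hx0]
    exact hb.2
  have hkVint : IntegrableOn (fun s => layer a M (VaR μ X s)) (Ioo (0:ℝ) 1) volume := by
    refine Integrable.mono' (integrable_const M)
      (hkcont.measurable.comp_aemeasurable hVmeas).aestronglyMeasurable ?_
    refine Filter.Eventually.of_forall fun s => ?_
    rw [Real.norm_eq_abs, abs_of_nonneg (hlayer_nonneg _)]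
    exact hlayer_le_M _
  constructor
  · -- increasing convex order
    intro g hgm hgcx hgik hgif
    obtain ⟨c, hc1, hc2⟩ := exists_subgrad hgcx M
    have hGk : Measurable fun x => g (layer a M x) := hgm.measurable.comp hkcont.measurable
    have hGf : Measurable fun x => g (f x) := hgm.measurable.comp hfc.measurable
    have e5 : ∫ ω, g (layer a M (X ω)) ∂μ = ∫ s in Ioo (0:ℝ) 1, g (layer a M (VaR μ X s)) :=
      integral_VaR_comp μ hXm hX0 hGk
    have e6 : ∫ ω, g (f (X ω)) ∂μ = ∫ s in Ioo (0:ℝ) 1, g (f (VaR μ X s)) :=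
      integral_VaR_comp μ hXm hX0 hGf
    have hikI : IntegrableOn (fun s => g (layer a M (VaR μ X s))) (Ioo (0:ℝ) 1) volume :=
      (integrable_VaR_comp_iff μ hXm hX0 hGk).1 hgik
    have hifI : IntegrableOn (fun s => g (f (VaR μ X s))) (Ioo (0:ℝ) 1) volume :=
      (integrable_VaR_comp_iff μ hXm hX0 hGf).1 hgif
    have hφint : IntegrableOn
        (fun s => c * (layer a M (VaR μ X s) - f (VaR μ X s))) (Ioo α (α+β)) volume :=
      ((hkVint.mono_set hIoo_sub).sub (hfVint.mono_set hIoo_sub)).const_mul c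
    have hmint : IntegrableOn
        ((Ioo α (α+β)).indicator (fun s => c * (layer a M (VaR μ X s) - f (VaR μ X s))))
        (Ioo (0:ℝ) 1) volume :=
      ((integrable_indicator_iff measurableSet_Ioo).2 hφint).integrableOn
    have hpt : ∀ s ∈ Ioo (0:ℝ) 1,
        g (layer a M (VaR μ X s)) ≤ g (f (VaR μ X s)) +
          (Ioo α (α+β)).indicator (fun s => c * (layer a M (VaR μ X s) - f (VaR μ X s))) s := by
      intro s hs
      have hx0 : 0 ≤ VaR μ X s := VaR_nonneg μ hX0 hs.2.le
      by_cases hband : s ∈ Ioo α (α+β)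
      · rw [indicator_of_mem hband]
        have hxd : d ≤ VaR μ X s := VaR_antitone μ hX0 hs.1 hband.2.le hαβ
        have hkM : layer a M (VaR μ X s) ≤ M := hlayer_le_M _
        rcases le_or_gt (f (VaR μ X s)) (layer a M (VaR μ X s)) with hfk | hkf
        · have := hc1 _ _ hfk hkM
          linarith
        · have hxa : f (VaR μ X s) ≤ VaR μ X s - a := by
            have h1 : d - f d ≤ VaR μ X s - f (VaR μ X s) := by
              have := hf.2.1 hxd
              simpa using this
            rw [ha]; linarith
          have hkeq : layer a M (VaR μ X s) = M := by
            rcases min_cases (max (VaR μ X s - a) 0) M with ⟨h1, h2⟩ | ⟨h1, h2⟩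
            · exfalso
              have heq : layer a M (VaR μ X s) = max (VaR μ X s - a) 0 := h1
              have h3 : f (VaR μ X s) ≤ max (VaR μ X s - a) 0 :=
                le_trans hxa (le_max_left _ _)
              rw [heq] at hkf
              linarith
            · exact h1
          have hMf : M ≤ f (VaR μ X s) := by rw [← hkeq]; exact hkf.le
          have := hc2 _ hMf
          rw [hkeq]
          linarith
      · rw [indicator_of_notMem hband, add_zero]
        simp only [mem_Ioo, not_and_or, not_lt] at hband
        rcases hband with hsa | hsb
        · have hα1 : α ≤ 1 := by linarith
          have hxα : VaR μ X α ≤ VaR μ X s := VaR_antitone μ hX0 hs.1 hsa hα1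
          have hMle : M ≤ f (VaR μ X s) := le_trans hM.2 (hf.1 hxα)
          exact hgm (le_trans (hlayer_le_M _) hMle)
        · have hxd : VaR μ X s ≤ d := VaR_antitone μ hX0 hαβ0 hsb hs.2.le
          exact hgm (hlayer_le_f _ hx0 hxd)
    have hzero : ∫ s in Ioo (0:ℝ) 1,
        (Ioo α (α+β)).indicator (fun s => c * (layer a M (VaR μ X s) - f (VaR μ X s))) s = 0 := by
      rw [setIntegral_indicator measurableSet_Ioo, inter_eq_self_of_subset_right hIoo_sub,
        MeasureTheory.integral_const_mul,
        integral_sub (hkVint.mono_set hIoo_sub) (hfVint.mono_set hIoo_sub), I_eq,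
        sub_self, mul_zero]
    have hgoal : (∫ s in Ioo (0:ℝ) 1, g (layer a M (VaR μ X s)))
        ≤ ∫ s in Ioo (0:ℝ) 1, g (f (VaR μ X s)) := by
      calc ∫ s in Ioo (0:ℝ) 1, g (layer a M (VaR μ X s))
          ≤ ∫ s in Ioo (0:ℝ) 1, (g (f (VaR μ X s)) +
              (Ioo α (α+β)).indicator
                (fun s => c * (layer a M (VaR μ X s) - f (VaR μ X s))) s) :=
            setIntegral_mono_on hikI (hifI.add hmint) measurableSet_Ioo hpt
        _ = (∫ s in Ioo (0:ℝ) 1, g (f (VaR μ X s))) + ∫ s in Ioo (0:ℝ) 1,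
              (Ioo α (α+β)).indicator
                (fun s => c * (layer a M (VaR μ X s) - f (VaR μ X s))) s :=
            integral_add hifI hmint
        _ = ∫ s in Ioo (0:ℝ) 1, g (f (VaR μ X s)) := by rw [hzero, add_zero]
    show (∫ ω, g (layer a M (X ω)) ∂μ) ≤ ∫ ω, g (f (X ω)) ∂μ
    rw [e5, e6]
    exact hgoal
  · -- retained loss RVaR equality
    simp only [RVaR]
    congr 1
    rw [intervalIntegral.integral_of_le hle, intervalIntegral.integral_of_le hle,
      MeasureTheory.integral_Ioc_eq_integral_Ioo, MeasureTheory.integral_Ioc_eq_integral_Ioo]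
    have e3 : ∀ s ∈ Ioo α (α+β),
        VaR μ (fun ω => X ω - layer a M (X ω)) s = VaR μ X s - layer a M (VaR μ X s) :=
      fun s hs => VaR_comp μ hXm hX0 hrkmono hrkcont (hIoo_sub hs).1 (hIoo_sub hs).2
    have e4 : ∀ s ∈ Ioo α (α+β),
        VaR μ (fun ω => X ω - f (X ω)) s = VaR μ X s - f (VaR μ X s) :=
      fun s hs => VaR_comp μ hXm hX0 hrfmono hrfcont (hIoo_sub hs).1 (hIoo_sub hs).2
    rw [setIntegral_congr_fun measurableSet_Ioo e3, setIntegral_congr_fun measurableSet_Ioo e4,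
      integral_sub (hVint.mono_set hIoo_sub) (hkVint.mono_set hIoo_sub),
      integral_sub (hVint.mono_set hIoo_sub) (hfVint.mono_set hIoo_sub), I_eq]
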